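/- arXiv:1804.05264 — 7 statements merged into one kernel-verified Lean document; each statement's English description precedes it below -/
import Mathlib

section
/- Let k be a field, let n, d, h be natural numbers, and let M be a matroid on ground set Fin n whose rank is d+1, with H : Fin h → Set (Fin n) a bijection onto the set of hyperplanes of M. If a matrix S : Matrix (Fin n) (Fin h) k satisfies S i j = 0 ↔ i ∈ H j for all i and j (that is, S has the same support as a slack matrix of M), then Matrix.rank S ≥ d + 1. -/
open Classical Matrix MvPolynomial

/-- `V` is a realization of the matroid `M`: a set `I` is independent in `M` iff the
columns of `V` indexed by `I` are linearly independent over `k`. -/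
def IsRealization {k : Type*} [Field k] {n d : ℕ} (M : Matroid (Fin n))
    (V : Matrix (Fin (d + 1)) (Fin n) k) : Prop :=
  ∀ I : Set (Fin n), M.Indep I ↔ LinearIndependent k (fun i : I => Vᵀ (i : Fin n))

/-- `F` is a hyperplane of `M`: a flat of `M` of rank `d`. -/
def IsHyperplane {n : ℕ} (M : Matroid (Fin n)) (d : ℕ) (F : Set (Fin n)) : Prop :=
  M.IsFlat F ∧ ∃ I, M.IsBasis I F ∧ I.ncard = d

/-- `H` is a bijection onto the set of hyperplanes of `M`. -/
def HypEnum {n h : ℕ} (M : Matroid (Fin n)) (d : ℕ) (H : Fin h → Set (Fin n)) : Prop :=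
  Function.Injective H ∧ ∀ F : Set (Fin n), (∃ j, H j = F) ↔ IsHyperplane M d F

/-- `M` has rank `r` : some base of `M` has cardinality `r`. -/
def HasRank {n : ℕ} (M : Matroid (Fin n)) (r : ℕ) : Prop :=
  ∃ B, M.IsBase B ∧ B.ncard = r

/-- `W` is a normal matrix for the realization `V`: the dot product of column `j` of `W`
with column `i` of `V` is zero iff `i ∈ H j`. -/
def IsNormalMatrix {k : Type*} [Field k] {n d h : ℕ} (H : Fin h → Set (Fin n))
    (V : Matrix (Fin (d + 1)) (Fin n) k) (W : Matrix (Fin (d + 1)) (Fin h) k) : Prop :=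
  ∀ i j, (∑ r : Fin (d + 1), W r j * V r i) = 0 ↔ i ∈ H j

/-- Projective equivalence of realizations. -/
def ProjEquiv {k : Type*} [Field k] {n d : ℕ}
    (V V' : Matrix (Fin (d + 1)) (Fin n) k) : Prop :=
  ∃ (A : Matrix (Fin (d + 1)) (Fin (d + 1)) k) (b : Fin n → kˣ),
    IsUnit A ∧ V' = A * V * Matrix.diagonal (fun i => (b i : k))

/-- The index type of slack variables: pairs `(i, j)` with `i ∉ H j`. -/
abbrev SlackVar {n h : ℕ} (H : Fin h → Set (Fin n)) : Type :=
  {p : Fin n × Fin h // p.1 ∉ H p.2}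

/-- The symbolic slack matrix of `M`. -/
noncomputable def symbSlack {n h : ℕ} (H : Fin h → Set (Fin n)) (k : Type*) [Field k] :
    Matrix (Fin n) (Fin h) (MvPolynomial (SlackVar H) k) :=
  fun i j => if hij : i ∈ H j then 0 else X ⟨(i, j), hij⟩

/-- The ideal `J` generated by the `(d+2)`-minors of the symbolic slack matrix. -/
noncomputable def minorIdeal {n h : ℕ} (d : ℕ) (H : Fin h → Set (Fin n)) (k : Type*)
    [Field k] : Ideal (MvPolynomial (SlackVar H) k) :=
  Ideal.span { f | ∃ (r : Fin (d + 2) → Fin n) (c : Fin (d + 2) → Fin h),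
    Function.Injective r ∧ Function.Injective c ∧
      f = ((symbSlack H k).submatrix r c).det }

/-- The product `P` of all slack variables. -/
noncomputable def allVarsProd {n h : ℕ} (H : Fin h → Set (Fin n)) (k : Type*) [Field k] :
    MvPolynomial (SlackVar H) k :=
  ∏ e : SlackVar H, X e

/-- The slack ideal `I_M` : the saturation of `J` at `P`, as a set. -/
noncomputable def slackSet {n h : ℕ} (d : ℕ) (H : Fin h → Set (Fin n)) (k : Type*) [Field k] :
    Set (MvPolynomial (SlackVar H) k) :=
  {f | ∃ N : ℕ, allVarsProd H k ^ N * f ∈ minorIdeal d H k}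

/-- The matrix `S(s)` obtained by evaluating the symbolic slack matrix at `s`. -/
noncomputable def slackEval {k : Type*} [Field k] {n h : ℕ} (H : Fin h → Set (Fin n))
    (s : SlackVar H → k) : Matrix (Fin n) (Fin h) k :=
  fun i j => if hij : i ∈ H j then 0 else s ⟨(i, j), hij⟩

/-- Cyclic successor in `Fin m`. -/
def cycSucc {m : ℕ} (i : Fin m) : Fin m := ⟨(i.val + 1) % m, Nat.mod_lt _ i.pos⟩

/-- The cycle ideal `C_S` of a slack matrix `S`. -/
noncomputable def cycleIdeal {k : Type*} [Field k] {n h : ℕ} (H : Fin h → Set (Fin n))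
    (S : Matrix (Fin n) (Fin h) k) : Ideal (MvPolynomial (SlackVar H) k) :=
  Ideal.span { f | ∃ (m : ℕ) (_ : 2 ≤ m) (a : Fin m → Fin n) (b : Fin m → Fin h)
    (_ : Function.Injective a) (_ : Function.Injective b)
    (h1 : ∀ i, a i ∉ H (b i)) (h2 : ∀ i, a (cycSucc i) ∉ H (b i)),
    f = C (∏ i, S (a (cycSucc i)) (b i)) * ∏ i, X ⟨(a i, b i), h1 i⟩
      - C (∏ i, S (a i) (b i)) * ∏ i, X ⟨(a (cycSucc i), b i), h2 i⟩ }

/-!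
A base `B` of `M` yields, for each `e ∈ B`, the hyperplane spanned by `B \ {e}`; it contains every
element of `B` except `e`. The rows of `S` indexed by `B` and the columns of these hyperplanes
therefore form a diagonal submatrix with nonzero diagonal, of size `|B| = d + 1`.
-/

theorem Matrix.card_le_rank_of_submatrix_diagonal {K m n ι : Type*} [Field K] [Fintype n]
    [Fintype ι] (A : Matrix m n K) (r : ι → m) (c : ι → n)
    (hoff : ∀ i j, i ≠ j → A (r i) (c j) = 0) (hdiag : ∀ i, A (r i) (c i) ≠ 0) :
    Fintype.card ι ≤ A.rank := by
  classical
  have hsub : A.submatrix r c = diagonal fun i => A (r i) (c i) := by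
    ext i j
    by_cases hij : i = j
    · subst hij; simp
    · simp [diagonal_apply_ne _ hij, hoff i j hij]
  calc Fintype.card ι = Fintype.card {i // A (r i) (c i) ≠ 0} :=
        (Fintype.card_congr (Equiv.subtypeUnivEquiv hdiag)).symm
    _ = (A.submatrix r c).rank := by rw [hsub, rank_diagonal]
    _ ≤ A.rank := rank_submatrix_le A r c

theorem isHyperplane_closure_diff_singleton {n d : ℕ} {M : Matroid (Fin n)} {B : Set (Fin n)}
    (hB : M.IsBase B) (hBcard : B.ncard = d + 1) {e : Fin n} (he : e ∈ B) :
    IsHyperplane M d (M.closure (B \ {e})) :=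
  ⟨M.isFlat_closure _, B \ {e}, (hB.indep.subset Set.sdiff_subset).isBasis_closure, by
    rw [Set.ncard_sdiff_singleton_of_mem he, hBcard, Nat.add_sub_cancel]⟩

theorem stmt0_general {k : Type*} [Field k] {n d h : ℕ} (M : Matroid (Fin n))
    (hrk : HasRank M (d + 1))
    (H : Fin h → Set (Fin n)) (hH : HypEnum M d H)
    (S : Matrix (Fin n) (Fin h) k) (hS : ∀ i j, S i j = 0 ↔ i ∈ H j) :
    d + 1 ≤ S.rank := by
  obtain ⟨B, hB, hBcard⟩ := hrk
  choose c hc using fun e : B =>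
    (hH.2 _).mpr (isHyperplane_closure_diff_singleton hB hBcard e.2)
  have hcard : Fintype.card B = d + 1 := by
    rw [← Nat.card_eq_fintype_card, Nat.card_coe_set_eq, hBcard]
  rw [← hcard]
  refine S.card_le_rank_of_submatrix_diagonal Subtype.val c (fun e e' hne => ?_) (fun e => ?_)
  · rw [hS, hc]
    exact M.subset_closure _ (Set.sdiff_subset.trans hB.subset_ground)
      ⟨e.2, fun he => hne (Subtype.ext he)⟩
  · rw [Ne, hS, hc]
    exact hB.indep.notMem_closure_sdiff_of_mem e.2

/-- any matrix with the support of a slack matrix of a rank `d+1` matroid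
has rank at least `d+1`. -/
theorem stmt0 {k : Type*} [Field k] {n d h : ℕ} (M : Matroid (Fin n))
    (hE : M.E = Set.univ) (hrk : HasRank M (d + 1))
    (H : Fin h → Set (Fin n)) (hH : HypEnum M d H)
    (S : Matrix (Fin n) (Fin h) k) (hS : ∀ i j, S i j = 0 ↔ i ∈ H j) :
    d + 1 ≤ S.rank :=
  stmt0_general M hrk H hH S hS
end

section
/- Let V be a realization of M, let W be a normal matrix for V, and let S = Vᵀ * W be the corresponding slack matrix. Then the rows of S form a realization of M: for every set I ⊆ Fin n, I is independent in M if and only if the rows of S indexed by I form a linearly independent family over k. -/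
open Classical Matrix MvPolynomial

/-
Vᵀ * W has rows `v_i ᵥ* W`, where `v_i` is column `i` of `V`, so it suffices that `v ↦ v ᵥ* W`
is injective. Choose a base `B` of `M`; the columns `v_b`, `b ∈ B`, form a basis of `k^(d+1)`.
For `b ∈ B` the closure of `B \ {b}` is a hyperplane `H j`, so column `j` of `W` vanishes on
every `v_{b'}` with `b' ≠ b` but not on `v_b`: up to a nonzero scalar it is the coordinate
function of `b`. Hence a vector killed by `W` has all coordinates zero.
-/

theorem LinearMap.injective_of_separates_basis {R E ι β : Type*} [CommRing R] [NoZeroDivisors R]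
    [AddCommGroup E] [Module R E] (L : E →ₗ[R] ι → R) (bas : Module.Basis β R E)
    (hL : ∀ b, ∃ j, L (bas b) j ≠ 0 ∧ ∀ b', b' ≠ b → L (bas b') j = 0) :
    Function.Injective L := by
  refine (injective_iff_map_eq_zero L).mpr fun v hv => bas.forall_coord_eq_zero_iff.mp fun b => ?_
  obtain ⟨j, hjb, hjb'⟩ := hL b
  have hcoord : (LinearMap.proj j).comp L = L (bas b) j • bas.coord b := by
    refine bas.ext fun b' => ?_
    obtain rfl | hne := eq_or_ne b' b
    · simp
    · simp [hjb' b' hne, Finsupp.single_eq_of_ne hne.symm]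
  have := LinearMap.congr_fun hcoord v
  simp only [LinearMap.comp_apply, LinearMap.proj_apply, hv, Pi.zero_apply,
    LinearMap.smul_apply, smul_eq_mul] at this
  exact (mul_eq_zero.mp this.symm).resolve_left hjb

theorem isHyperplane_closure_sdiff_singleton {n d : ℕ} {M : Matroid (Fin n)} {B : Set (Fin n)}
    (hB : M.IsBase B) (hBcard : B.ncard = d + 1) {b : Fin n} (hb : b ∈ B) :
    IsHyperplane M d (M.closure (B \ {b})) :=
  ⟨M.isFlat_closure _, B \ {b}, (hB.indep.subset Set.sdiff_subset).isBasis_closure, by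
    rw [Set.ncard_sdiff_singleton_of_mem hb, hBcard, Nat.add_sub_cancel]⟩

theorem IsNormalMatrix.vecMul_apply_eq_zero_iff {k : Type*} [Field k] {n d h : ℕ}
    {H : Fin h → Set (Fin n)} {V : Matrix (Fin (d + 1)) (Fin n) k}
    {W : Matrix (Fin (d + 1)) (Fin h) k} (hW : IsNormalMatrix H V W) (i : Fin n) (j : Fin h) :
    (Vᵀ i ᵥ* W) j = 0 ↔ i ∈ H j := by
  simp only [vecMul, dotProduct, transpose_apply, mul_comm (V _ i)]
  exact hW i j

theorem vecMulLinear_injective_of_isNormalMatrix {k : Type*} [Field k] {n d h : ℕ}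
    {M : Matroid (Fin n)} (hrk : HasRank M (d + 1)) {H : Fin h → Set (Fin n)}
    (hH : HypEnum M d H) {V : Matrix (Fin (d + 1)) (Fin n) k} (hV : IsRealization M V)
    {W : Matrix (Fin (d + 1)) (Fin h) k} (hW : IsNormalMatrix H V W) :
    Function.Injective W.vecMulLinear := by
  obtain ⟨B, hB, hBcard⟩ := hrk
  have hcard : Fintype.card B = Module.finrank k (Fin (d + 1) → k) := by
    rw [Module.finrank_fin_fun, ← Nat.card_eq_fintype_card, Nat.card_coe_set_eq, hBcard]
  have : Nonempty B := (Set.nonempty_of_ncard_ne_zero (by omega)).to_subtype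
  let bas := basisOfLinearIndependentOfCardEqFinrank ((hV B).mp hB.indep) hcard
  refine W.vecMulLinear.injective_of_separates_basis bas fun b => ?_
  obtain ⟨j, hj⟩ := (hH.2 _).mpr (isHyperplane_closure_sdiff_singleton hB hBcard b.2)
  refine ⟨j, fun h0 => ?_, fun b' hb' => ?_⟩
  · have hb : (b : Fin n) ∈ H j := (hW.vecMul_apply_eq_zero_iff _ j).mp (by simpa [bas] using h0)
    rw [hj] at hb
    exact hB.indep.notMem_closure_sdiff_of_mem b.2 hb
  · have hb' : (b' : Fin n) ∈ H j := by
      rw [hj]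
      exact M.subset_closure _ (Set.sdiff_subset.trans hB.subset_ground)
        ⟨b'.2, fun h => hb' (Subtype.ext h)⟩
    simpa [bas] using (hW.vecMul_apply_eq_zero_iff _ j).mpr hb'

theorem stmt2_general {k : Type*} [Field k] {n d h : ℕ} (M : Matroid (Fin n))
    (hrk : HasRank M (d + 1))
    (H : Fin h → Set (Fin n)) (hH : HypEnum M d H)
    (V : Matrix (Fin (d + 1)) (Fin n) k) (hV : IsRealization M V)
    (W : Matrix (Fin (d + 1)) (Fin h) k) (hW : IsNormalMatrix H V W) :
    ∀ I : Set (Fin n),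
      M.Indep I ↔ LinearIndependent k (fun i : I => (Vᵀ * W) (i : Fin n)) := by
  intro I
  rw [hV I]
  exact (W.vecMulLinear.linearIndependent_iff_of_injOn
    (vecMulLinear_injective_of_isNormalMatrix hrk hH hV hW).injOn).symm

/-- the rows of a slack matrix of `M` form a realization of `M`. -/
theorem stmt2 {k : Type*} [Field k] {n d h : ℕ} (M : Matroid (Fin n))
    (hE : M.E = Set.univ) (hrk : HasRank M (d + 1))
    (H : Fin h → Set (Fin n)) (hH : HypEnum M d H)
    (V : Matrix (Fin (d + 1)) (Fin n) k) (hV : IsRealization M V)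
    (W : Matrix (Fin (d + 1)) (Fin h) k) (hW : IsNormalMatrix H V W) :
    ∀ I : Set (Fin n),
      M.Indep I ↔ LinearIndependent k (fun i : I => (Vᵀ * W) (i : Fin n)) :=
  stmt2_general M hrk H hH V hV W hW
end

section
/- Let S : Matrix (Fin n) (Fin h) k. Then there exist a realization V of M and a normal matrix W for V with S = Vᵀ * W if and only if both of the following hold: (i) for all i and j, S i j = 0 ↔ i ∈ H j; and (ii) Matrix.rank S = d + 1. -/
open Classical Matrix MvPolynomial

/-!
For a base `B` of `M` and `b ∈ B`, the closure of `B \ {b}` is a hyperplane, so a matrix `S`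
with the support of `M` has a column vanishing on `M.closure (B \ {b})` but not in row `b`.
These columns separate rows: if `J ⊆ B` and the rows of `S` over `I ⊆ M.closure J` are
independent, so are those over `I ∪ (B \ J)`. With `I = ∅` this shows that independent sets
of `M` index independent rows, whence `rank S ≥ d + 1`. If `rank S = d + 1`, a dependent `I`
with independent rows would give, for a basis `J` of `I` and any `i ∈ I \ J`, the `d + 2`
independent rows over `insert i B`. Conversely, `S` of rank `d + 1` factors as `Vᵀ * W` with
`W` of full row rank, and right multiplication by `W` preserves linear independence of rows.
-/

section LinearAlgebra

variable {k ι κ : Type*} [Field k]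

lemma notMem_span_image_of_apply_ne_zero {v : ι → κ → k} {s : Set ι} {a : ι} {j : κ}
    (ha : v a j ≠ 0) (hs : ∀ x ∈ s, v x j = 0) : v a ∉ Submodule.span k (v '' s) := by
  have hle : Submodule.span k (v '' s) ≤ LinearMap.ker (LinearMap.proj j) :=
    Submodule.span_le.mpr (by rintro _ ⟨x, hx, rfl⟩; exact hs x hx)
  exact fun hmem => ha (hle hmem)

lemma LinearIndepOn.union_of_exists_apply_ne_zero {v : ι → κ → k} {s t : Set ι}
    (hs : LinearIndepOn k v s) (ht : t.Finite)
    (hsep : ∀ b ∈ t, ∃ j, v b j ≠ 0 ∧ ∀ x ∈ s ∪ t, x ≠ b → v x j = 0) :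
    LinearIndepOn k v (s ∪ t) := by
  refine ht.induction_on_subset (motive := fun u _ => LinearIndepOn k v (s ∪ u)) t
    (by simpa using hs) ?_
  intro a u hat hut hau hu
  obtain ⟨j, hj, hvanish⟩ := hsep a hat
  rw [Set.union_insert, linearIndepOn_insert_iff]
  refine ⟨hu, fun hmem => by_contra fun hnew => notMem_span_image_of_apply_ne_zero hj ?_ hmem⟩
  exact fun x hx =>
    hvanish x (Set.union_subset_union_right s hut hx) (ne_of_mem_of_not_mem hx hnew)

end LinearAlgebra

section MatrixRank

variable {k m n : Type*} [Field k]

lemma Matrix.ncard_le_rank_of_linearIndepOn_row [Fintype m] [Fintype n] {S : Matrix m n k}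
    {s : Set m} (hs : LinearIndepOn k S.row s) : s.ncard ≤ S.rank := by
  rw [Matrix.rank_eq_finrank_span_row, Set.ncard_eq_toFinset_card', Set.toFinset_card,
    ← finrank_span_eq_card hs, ← Set.image_eq_range]
  exact Submodule.finrank_mono (Submodule.span_mono (Set.image_subset_range _ _))

lemma Matrix.exists_eq_mul_of_rank_eq [Fintype m] [Fintype n] {S : Matrix m n k} {r : ℕ}
    (hS : S.rank = r) :
    ∃ (A : Matrix m (Fin r) k) (W : Matrix (Fin r) n k),
      LinearIndependent k W.row ∧ S = A * W := by
  set R := Submodule.span k (Set.range S.row)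
  let β : Module.Basis (Fin r) k R :=
    Module.finBasisOfFinrankEq k R ((S.rank_eq_finrank_span_row).symm.trans hS)
  have hmem (i : m) : S i ∈ R := Submodule.subset_span ⟨i, rfl⟩
  refine ⟨.of fun i => β.repr ⟨S i, hmem i⟩, .of fun r => β r,
    β.linearIndependent.map' R.subtype R.ker_subtype, ?_⟩
  ext i j
  have := congrArg (fun x : R => (x : n → k) j) (β.sum_repr ⟨S i, hmem i⟩)
  simp only [Submodule.coe_sum, Submodule.coe_smul, Finset.sum_apply, Pi.smul_apply,
    smul_eq_mul] at this
  rw [Matrix.mul_apply]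
  exact this.symm

lemma Matrix.linearIndepOn_row_mul_iff {r : Type*} [Fintype r] {A : Matrix m r k}
    {W : Matrix r n k} (hW : LinearIndependent k W.row) (s : Set m) :
    LinearIndepOn k (A * W).row s ↔ LinearIndepOn k A.row s := by
  have hrow : (A * W).row = W.vecMulLinear ∘ A.row := funext (Matrix.mul_apply_eq_vecMul A W)
  rw [hrow]
  exact W.vecMulLinear.linearIndepOn_iff_of_injOn
    ((Matrix.vecMul_injective_iff.mpr hW).injOn)

end MatrixRank

section Matroid

variable {k : Type*} [Field k] {n d h : ℕ} {M : Matroid (Fin n)} {H : Fin h → Set (Fin n)}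
  {S : Matrix (Fin n) (Fin h) k} {B : Set (Fin n)}

lemma HasRank.ncard_eq_of_isBase {r : ℕ} (hrk : HasRank M r) (hB : M.IsBase B) :
    B.ncard = r := by
  obtain ⟨B₀, hB₀, rfl⟩ := hrk
  exact hB.ncard_eq_ncard_of_isBase hB₀

lemma HypEnum.exists_eq_closure_diff_singleton (hH : HypEnum M d H) (hrk : HasRank M (d + 1))
    (hB : M.IsBase B) {b : Fin n} (hb : b ∈ B) : ∃ j, H j = M.closure (B \ {b}) := by
  refine (hH.2 _).mpr ⟨M.isFlat_closure _, B \ {b},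
    (hB.indep.subset Set.sdiff_subset).isBasis_closure, ?_⟩
  rw [Set.ncard_sdiff_singleton_of_mem hb, hrk.ncard_eq_of_isBase hB]
  rfl

-- `j` indexes the hyperplane spanned by `B \ {b}`.
lemma exists_apply_ne_zero_of_isBase (hrk : HasRank M (d + 1)) (hH : HypEnum M d H)
    (hsupp : ∀ i j, S i j = 0 ↔ i ∈ H j) (hB : M.IsBase B) {b : Fin n} (hb : b ∈ B) :
    ∃ j, S b j ≠ 0 ∧ ∀ x ∈ M.closure (B \ {b}), S x j = 0 := by
  obtain ⟨j, hj⟩ := hH.exists_eq_closure_diff_singleton hrk hB hb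
  refine ⟨j, fun h0 => hB.indep.notMem_closure_sdiff_of_mem hb ?_, fun x hx => ?_⟩
  · exact hj ▸ (hsupp b j).mp h0
  · exact (hsupp x j).mpr (hj ▸ hx)

lemma LinearIndepOn.union_diff_of_subset_closure (hrk : HasRank M (d + 1))
    (hH : HypEnum M d H) (hsupp : ∀ i j, S i j = 0 ↔ i ∈ H j) (hB : M.IsBase B)
    {I J : Set (Fin n)} (hJB : J ⊆ B) (hIJ : I ⊆ M.closure J) (hI : LinearIndepOn k S.row I) :
    LinearIndepOn k S.row (I ∪ B \ J) := by
  refine hI.union_of_exists_apply_ne_zero B.toFinite.sdiff fun b hb => ?_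
  obtain ⟨j, hbj, hvanish⟩ := exists_apply_ne_zero_of_isBase hrk hH hsupp hB hb.1
  refine ⟨j, hbj, fun x hx hxb => hvanish x ?_⟩
  rcases hx with hx | hx
  · exact M.closure_subset_closure (Set.subset_sdiff_singleton hJB hb.2) (hIJ hx)
  · exact M.subset_closure _ (Set.sdiff_subset.trans hB.subset_ground) ⟨hx.1, hxb⟩

lemma linearIndepOn_row_of_indep (hrk : HasRank M (d + 1)) (hH : HypEnum M d H)
    (hsupp : ∀ i j, S i j = 0 ↔ i ∈ H j) {I : Set (Fin n)} (hI : M.Indep I) :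
    LinearIndepOn k S.row I := by
  obtain ⟨B, hB, hIB⟩ := hI.exists_isBase_superset
  have hBrows := LinearIndepOn.union_diff_of_subset_closure hrk hH hsupp hB
    (Set.empty_subset B) (Set.empty_subset _) (linearIndepOn_empty k S.row)
  exact hBrows.mono (by simpa using hIB)

lemma indep_of_linearIndepOn_row (hE : M.E = Set.univ) (hrk : HasRank M (d + 1))
    (hH : HypEnum M d H) (hsupp : ∀ i j, S i j = 0 ↔ i ∈ H j) (hrank : S.rank ≤ d + 1)
    {I : Set (Fin n)} (hI : LinearIndepOn k S.row I) : M.Indep I := by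
  obtain ⟨J, hJ⟩ := M.exists_isBasis I (hE ▸ Set.subset_univ I)
  obtain ⟨B, hB, hJB⟩ := hJ.indep.exists_isBase_superset
  by_contra hdep
  obtain ⟨i, hiI, hiJ⟩ : ∃ i ∈ I, i ∉ J := by
    by_contra! hIJ
    exact hdep (hJ.indep.subset hIJ)
  have hiB : i ∉ B := fun hiB => hB.indep.notMem_closure_sdiff_of_mem hiB
    (M.closure_subset_closure (Set.subset_sdiff_singleton hJB hiJ)
      (hJ.subset_closure hiI))
  have hrows := hI.union_diff_of_subset_closure hrk hH hsupp hB hJB hJ.subset_closure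
  have hsub : insert i B ⊆ I ∪ B \ J := by
    rintro x (rfl | hxB)
    · exact .inl hiI
    · by_cases hxJ : x ∈ J
      · exact .inl (hJ.subset hxJ)
      · exact .inr ⟨hxB, hxJ⟩
  have := Matrix.ncard_le_rank_of_linearIndepOn_row (hrows.mono hsub)
  rw [Set.ncard_insert_of_notMem hiB, hrk.ncard_eq_of_isBase hB] at this
  omega

end Matroid

lemma Matrix.transpose_mul_apply_eq_sum {R l m n : Type*} [CommSemiring R] [Fintype l]
    (V : Matrix l m R) (W : Matrix l n R) (i : m) (j : n) :
    (Vᵀ * W) i j = ∑ r, W r j * V r i := by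
  simp only [Matrix.mul_apply, Matrix.transpose_apply, mul_comm]

/-- a matrix is a slack matrix of some realization of `M` iff it has the
right support and rank `d+1`. -/
theorem stmt3 {k : Type*} [Field k] {n d h : ℕ} (M : Matroid (Fin n))
    (hE : M.E = Set.univ) (hrk : HasRank M (d + 1))
    (H : Fin h → Set (Fin n)) (hH : HypEnum M d H)
    (S : Matrix (Fin n) (Fin h) k) :
    (∃ (V : Matrix (Fin (d + 1)) (Fin n) k) (W : Matrix (Fin (d + 1)) (Fin h) k),
        IsRealization M V ∧ IsNormalMatrix H V W ∧ S = Vᵀ * W) ↔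
      ((∀ i j, S i j = 0 ↔ i ∈ H j) ∧ S.rank = d + 1) := by
  constructor
  · rintro ⟨V, W, -, hnorm, rfl⟩
    have hsupp (i j) : (Vᵀ * W) i j = 0 ↔ i ∈ H j := by
      rw [Matrix.transpose_mul_apply_eq_sum]
      exact hnorm i j
    obtain ⟨B, hB, hBcard⟩ := hrk
    refine ⟨hsupp, le_antisymm ?_ ?_⟩
    · exact (Matrix.rank_mul_le_left _ _).trans (Matrix.rank_le_width _)
    · exact hBcard.ge.trans <| Matrix.ncard_le_rank_of_linearIndepOn_row
        (linearIndepOn_row_of_indep ⟨B, hB, hBcard⟩ hH hsupp hB.indep)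
  · rintro ⟨hsupp, hrank⟩
    obtain ⟨A, W, hW, rfl⟩ := Matrix.exists_eq_mul_of_rank_eq hrank
    refine ⟨Aᵀ, W, fun I => ?_, fun i j => ?_, rfl⟩
    · change M.Indep I ↔ LinearIndepOn k A.row I
      rw [← Matrix.linearIndepOn_row_mul_iff hW]
      exact ⟨linearIndepOn_row_of_indep hrk hH hsupp,
        indep_of_linearIndepOn_row hE hrk hH hsupp hrank.le⟩
    · rw [← Matrix.transpose_mul_apply_eq_sum, Matrix.transpose_transpose]
      exact hsupp i j
end

section
/- Let V and V' be realizations of M, let W and W' be normal matrices for V and V' respectively, and let S = Vᵀ * W and S' = V'ᵀ * W' be the corresponding slack matrices. Then V and V' are linearly equivalent (that is, V' = A * V for some invertible matrix A : Matrix (Fin (d+1)) (Fin (d+1)) k) if and only if there exists an invertible diagonal matrix D_h : Matrix (Fin h) (Fin h) k such that S' = S * D_h. -/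
open Classical Matrix MvPolynomial

/-! Forward direction: if `V' = A * V`, then `Aᵀ * W'` is a second normal matrix for `V`, and
each column of a normal matrix is determined up to a nonzero scalar: it is orthogonal to the `d`
independent columns of a basis of its hyperplane, which together with one further column of `V`
span `k^(d+1)`. Backward direction: choosing a base `b` of `M` and, for each `s`,
the hyperplane spanned by the other base elements gives columns `jj` for which
`(Vᵀ * W)` restricted to `b × jj` is an invertible diagonal matrix; so `W` restricted to the
columns `jj` is invertible, and `S' = S * D` restricted to these columns can be solved for `V'`. -/

theorem Set.exists_injective_range_eq_of_ncard_eq {α : Type*} {B : Set α} (hfin : B.Finite)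
    {m : ℕ} (hB : B.ncard = m) : ∃ b : Fin m → α, Function.Injective b ∧ Set.range b = B := by
  have := hfin.to_subtype
  let e : B ≃ Fin m := Finite.equivFinOfCardEq (by rwa [Nat.card_coe_set_eq])
  refine ⟨fun s => e.symm s, Subtype.coe_injective.comp e.symm.injective, ?_⟩
  ext x
  exact ⟨by rintro ⟨s, rfl⟩; exact (e.symm s).2, fun hx => ⟨e ⟨x, hx⟩, by simp⟩⟩

theorem Matrix.isUnit_of_mul_apply_eq_zero_iff {m K : Type*} [Fintype m] [DecidableEq m]
    [Field K] {P Q : Matrix m m K} (h : ∀ i j, (P * Q) i j = 0 ↔ i ≠ j) : IsUnit Q := by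
  have hdiag : P * Q = diagonal fun i => (P * Q) i i := by
    ext i j
    rcases eq_or_ne i j with rfl | hij
    · simp
    · rw [diagonal_apply_ne _ hij, (h i j).2 hij]
  have hdet : IsUnit (P * Q).det := by
    rw [hdiag, det_diagonal]
    exact isUnit_iff_ne_zero.mpr (Finset.prod_ne_zero_iff.mpr fun i _ => by simp [h])
  rw [det_mul] at hdet
  exact (isUnit_iff_isUnit_det Q).mpr (isUnit_of_mul_isUnit_right hdet)

theorem Matrix.exists_isUnit_eq_mul_of_transpose_mul_eq {m n K : Type*} [Fintype m]
    [DecidableEq m] [Field K] {V V' : Matrix m n K} {N N' : Matrix m m K} (hN : IsUnit N)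
    (hN' : IsUnit N') (h : V'ᵀ * N' = Vᵀ * N) : ∃ A : Matrix m m K, IsUnit A ∧ V' = A * V := by
  have hNV : N'ᵀ * V' = Nᵀ * V := by simpa using congrArg transpose h
  refine ⟨N'ᵀ⁻¹ * Nᵀ, (isUnit_nonsing_inv_iff.mpr ((isUnit_transpose _).mpr hN')).mul ((isUnit_transpose _).mpr hN), ?_⟩
  rw [Matrix.mul_assoc, ← hNV, nonsing_inv_mul_cancel_left]
  exact (isUnit_iff_isUnit_det _).mp ((isUnit_transpose _).mpr hN')

section Matroid

variable {n d h : ℕ} {M : Matroid (Fin n)}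

theorem HasRank.ncard_eq {r : ℕ} (hrk : HasRank M r) {B : Set (Fin n)} (hB : M.IsBase B) :
    B.ncard = r := by
  obtain ⟨B₀, hB₀, rfl⟩ := hrk
  exact hB.ncard_eq_ncard_of_isBase hB₀

theorem HasRank.exists_isBase_range {r : ℕ} (hrk : HasRank M r) :
    ∃ b : Fin r → Fin n, Function.Injective b ∧ M.IsBase (Set.range b) := by
  obtain ⟨B, hB, hBc⟩ := hrk
  obtain ⟨b, hb, rfl⟩ := Set.exists_injective_range_eq_of_ncard_eq B.toFinite hBc
  exact ⟨b, hb, hB⟩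

theorem IsHyperplane.exists_isBase_insert (hrk : HasRank M (d + 1)) {F : Set (Fin n)}
    (hF : IsHyperplane M d F) : ∃ i ∉ F, ∃ I ⊆ F, M.IsBase (insert i I) := by
  obtain ⟨-, I, hI, hIc⟩ := hF
  obtain ⟨B, hB, hIB⟩ := hI.indep.exists_isBase_superset
  have hdiff : (B \ I).ncard = 1 := by
    rw [Set.ncard_sdiff hIB, hrk.ncard_eq hB, hIc]
    omega
  obtain ⟨i, hi⟩ := Set.ncard_eq_one.mp hdiff
  have hiBI : i ∈ B \ I := hi ▸ rfl
  refine ⟨i, fun hiF => hiBI.2 (hI.mem_of_insert_indep hiF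
    (hB.indep.subset (Set.insert_subset hiBI.1 hIB))), I, hI.subset, ?_⟩
  rwa [Set.insert_eq, ← hi, Set.union_comm, Set.union_sdiff_cancel hIB]

theorem HypEnum.exists_fundamental_hyperplanes {H : Fin h → Set (Fin n)} (hH : HypEnum M d H)
    (hrk : HasRank M (d + 1)) {b : Fin (d + 1) → Fin n} (hb : Function.Injective b)
    (hB : M.IsBase (Set.range b)) :
    ∃ jj : Fin (d + 1) → Fin h, ∀ s t, b t ∈ H (jj s) ↔ t ≠ s := by
  choose jj hjj using fun s => (hH.2 (M.closure (Set.range b \ {b s}))).2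
    ⟨M.isFlat_closure _, _, (hB.indep.subset Set.sdiff_subset).isBasis_closure, by
      rw [Set.ncard_sdiff_singleton_of_mem (Set.mem_range_self s), hrk.ncard_eq hB]; rfl⟩
  refine ⟨jj, fun s t => ?_⟩
  rw [hjj]
  constructor
  · rintro hmem rfl
    exact hB.indep.notMem_closure_sdiff_of_mem (Set.mem_range_self t) hmem
  · intro hts
    exact M.subset_closure _ (Set.sdiff_subset.trans hB.subset_ground)
      ⟨Set.mem_range_self t, hb.ne hts⟩

end Matroid

section Realization

variable {k : Type*} [Field k] {n d h : ℕ} {M : Matroid (Fin n)}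
  {V : Matrix (Fin (d + 1)) (Fin n) k}

theorem isNormalMatrix_iff {H : Fin h → Set (Fin n)} {W : Matrix (Fin (d + 1)) (Fin h) k} :
    IsNormalMatrix H V W ↔ ∀ i j, (Vᵀ * W) i j = 0 ↔ i ∈ H j := by
  simp only [IsNormalMatrix, mul_apply, transpose_apply, mul_comm]

theorem IsRealization.isUnit_submatrix (hV : IsRealization M V) {b : Fin (d + 1) → Fin n}
    (hb : Function.Injective b) (hB : M.Indep (Set.range b)) : IsUnit (V.submatrix id b) := by
  rw [← linearIndependent_cols_iff_isUnit]
  exact ((hV _).1 hB).comp (Equiv.ofInjective b hb) (Equiv.injective _)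

theorem IsRealization.eq_of_mulVec_eq_on_isBase (hV : IsRealization M V)
    (hrk : HasRank M (d + 1)) {B : Set (Fin n)} (hB : M.IsBase B) {x y : Fin (d + 1) → k}
    (hxy : ∀ i ∈ B, (Vᵀ *ᵥ x) i = (Vᵀ *ᵥ y) i) : x = y := by
  obtain ⟨b, hb, rfl⟩ := Set.exists_injective_range_eq_of_ncard_eq B.toFinite (hrk.ncard_eq hB)
  refine mulVec_injective_iff_isUnit.mpr ((isUnit_transpose _).mpr (hV.isUnit_submatrix hb hB.indep)) ?_
  funext s
  exact hxy _ (Set.mem_range_self s)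

theorem IsRealization.exists_eq_smul_of_isHyperplane (hV : IsRealization M V)
    (hrk : HasRank M (d + 1)) {F : Set (Fin n)} (hF : IsHyperplane M d F)
    {w w' : Fin (d + 1) → k} (hw : ∀ i, (Vᵀ *ᵥ w) i = 0 ↔ i ∈ F)
    (hw' : ∀ i, (Vᵀ *ᵥ w') i = 0 ↔ i ∈ F) : ∃ c : kˣ, w' = (c : k) • w := by
  obtain ⟨i, hiF, I, hIF, hB⟩ := hF.exists_isBase_insert hrk
  have hwi : (Vᵀ *ᵥ w) i ≠ 0 := mt (hw i).1 hiF
  have hw'i : (Vᵀ *ᵥ w') i ≠ 0 := mt (hw' i).1 hiF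
  refine ⟨Units.mk0 _ (div_ne_zero hw'i hwi), hV.eq_of_mulVec_eq_on_isBase hrk hB ?_⟩
  rintro l (rfl | hl)
  · simp [mulVec_smul, hwi]
  · rw [mulVec_smul, Pi.smul_apply, (hw l).2 (hIF hl), (hw' l).2 (hIF hl), smul_zero]

theorem IsRealization.exists_eq_mul_diagonal_of_isNormalMatrix (hV : IsRealization M V)
    (hrk : HasRank M (d + 1)) {H : Fin h → Set (Fin n)} (hH : HypEnum M d H)
    {W W' : Matrix (Fin (d + 1)) (Fin h) k} (hW : IsNormalMatrix H V W)
    (hW' : IsNormalMatrix H V W') :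
    ∃ dh : Fin h → kˣ, W' = W * diagonal fun j => (dh j : k) := by
  rw [isNormalMatrix_iff] at hW hW'
  choose dh hdh using fun j => hV.exists_eq_smul_of_isHyperplane hrk ((hH.2 _).1 ⟨j, rfl⟩)
    (w := Wᵀ j) (w' := W'ᵀ j) (hW · j) (hW' · j)
  refine ⟨dh, ?_⟩
  ext r j
  rw [mul_diagonal, mul_comm]
  exact congrFun (hdh j) r

theorem IsNormalMatrix.transpose_mul {H : Fin h → Set (Fin n)}
    {A : Matrix (Fin (d + 1)) (Fin (d + 1)) k} {W : Matrix (Fin (d + 1)) (Fin h) k}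
    (hW : IsNormalMatrix H (A * V) W) : IsNormalMatrix H V (Aᵀ * W) := by
  rw [isNormalMatrix_iff] at hW ⊢
  simpa only [Matrix.transpose_mul, Matrix.mul_assoc] using hW

theorem IsNormalMatrix.isUnit_submatrix {H : Fin h → Set (Fin n)}
    {W : Matrix (Fin (d + 1)) (Fin h) k} (hW : IsNormalMatrix H V W)
    {b : Fin (d + 1) → Fin n} {jj : Fin (d + 1) → Fin h}
    (hjj : ∀ s t, b t ∈ H (jj s) ↔ t ≠ s) : IsUnit (W.submatrix id jj) := by
  refine isUnit_of_mul_apply_eq_zero_iff (P := (V.submatrix id b)ᵀ) fun t s => ?_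
  rw [transpose_submatrix, ← submatrix_mul _ _ _ _ _ Function.bijective_id]
  exact (isNormalMatrix_iff.mp hW _ _).trans (hjj s t)

end Realization

theorem stmt5_general {k : Type*} [Field k] {n d h : ℕ} (M : Matroid (Fin n))
    (hrk : HasRank M (d + 1))
    (H : Fin h → Set (Fin n)) (hH : HypEnum M d H)
    (V V' : Matrix (Fin (d + 1)) (Fin n) k)
    (hV : IsRealization M V)
    (W W' : Matrix (Fin (d + 1)) (Fin h) k)
    (hW : IsNormalMatrix H V W) (hW' : IsNormalMatrix H V' W') :
    (∃ A : Matrix (Fin (d + 1)) (Fin (d + 1)) k, IsUnit A ∧ V' = A * V) ↔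
      ∃ dh : Fin h → kˣ,
        V'ᵀ * W' = (Vᵀ * W) * Matrix.diagonal (fun j => (dh j : k)) := by
  constructor
  · rintro ⟨A, -, rfl⟩
    obtain ⟨dh, hdh⟩ := hV.exists_eq_mul_diagonal_of_isNormalMatrix hrk hH hW hW'.transpose_mul
    exact ⟨dh, by rw [Matrix.transpose_mul, Matrix.mul_assoc, hdh, Matrix.mul_assoc]⟩
  · rintro ⟨dh, hS⟩
    obtain ⟨b, hb, hB⟩ := hrk.exists_isBase_range
    obtain ⟨jj, hjj⟩ := hH.exists_fundamental_hyperplanes hrk hb hB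
    have hD : IsUnit (diagonal fun s => (dh (jj s) : k)) :=
      isUnit_diagonal.mpr (Pi.isUnit_iff.mpr fun s => (dh (jj s)).isUnit)
    refine exists_isUnit_eq_mul_of_transpose_mul_eq ((hW.isUnit_submatrix hjj).mul hD)
      (hW'.isUnit_submatrix hjj) ?_
    ext i s
    have hentry := congrFun (congrFun hS i) (jj s)
    rw [mul_diagonal] at hentry
    rw [← Matrix.mul_assoc, mul_diagonal]
    exact hentry

/-- two realizations are linearly equivalent iff their slack matrices
differ by invertible column scalings. -/
theorem stmt5 {k : Type*} [Field k] {n d h : ℕ} (M : Matroid (Fin n))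
    (hE : M.E = Set.univ) (hrk : HasRank M (d + 1))
    (H : Fin h → Set (Fin n)) (hH : HypEnum M d H)
    (V V' : Matrix (Fin (d + 1)) (Fin n) k)
    (hV : IsRealization M V) (hV' : IsRealization M V')
    (W W' : Matrix (Fin (d + 1)) (Fin h) k)
    (hW : IsNormalMatrix H V W) (hW' : IsNormalMatrix H V' W') :
    (∃ A : Matrix (Fin (d + 1)) (Fin (d + 1)) k, IsUnit A ∧ V' = A * V) ↔
      ∃ dh : Fin h → kˣ,
        V'ᵀ * W' = (Vᵀ * W) * Matrix.diagonal (fun j => (dh j : k)) :=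
  stmt5_general M hrk H hH V V' hV W W' hW hW'
end

section
/- Let V be a realization of M, W a normal matrix for V, and S = Vᵀ * W the corresponding slack matrix. For any invertible diagonal matrices D_n : Matrix (Fin n) (Fin n) k and D_h : Matrix (Fin h) (Fin h) k, there exist a realization V' of M and a normal matrix W' for V' such that V'ᵀ * W' = D_n * S * D_h; that is, the set of slack matrices of realizations of M is closed under the action of the torus of row and column scalings. -/
open Classical Matrix MvPolynomial

namespace Matrix

variable {R l m n : Type*} [CommSemiring R] [Fintype m] [DecidableEq m]

theorem transpose_mul_diagonal_apply (V : Matrix l m R) (a : m → R) (i : m) :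
    (V * diagonal a)ᵀ i = a i • Vᵀ i := by
  ext r
  simp [mul_comm]

theorem transpose_mul_diagonal_mul_mul_diagonal [Fintype l] [Fintype n] [DecidableEq n]
    (V : Matrix l m R) (W : Matrix l n R) (a : m → R) (b : n → R) :
    (V * diagonal a)ᵀ * (W * diagonal b) = diagonal a * (Vᵀ * W) * diagonal b := by
  rw [transpose_mul, diagonal_transpose, Matrix.mul_assoc, Matrix.mul_assoc, Matrix.mul_assoc]

end Matrix

section TorusAction

variable {k : Type*} [Field k] {n d : ℕ}

theorem IsRealization.mul_diagonal_units {M : Matroid (Fin n)}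
    {V : Matrix (Fin (d + 1)) (Fin n) k} (hV : IsRealization M V) (a : Fin n → kˣ) :
    IsRealization M (V * diagonal fun i => (a i : k)) := by
  intro I
  have hcols : (fun i : I => (V * diagonal fun i => (a i : k))ᵀ (i : Fin n)) =
      (fun i : I => a i) • fun i : I => Vᵀ (i : Fin n) := by
    funext i
    exact V.transpose_mul_diagonal_apply _ i
  rw [hV I, hcols, LinearIndependent.units_smul_iff]

theorem IsNormalMatrix.mul_diagonal_units {h : ℕ} {H : Fin h → Set (Fin n)}
    {V : Matrix (Fin (d + 1)) (Fin n) k} {W : Matrix (Fin (d + 1)) (Fin h) k}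
    (hW : IsNormalMatrix H V W) (a : Fin n → kˣ) (b : Fin h → kˣ) :
    IsNormalMatrix H (V * diagonal fun i => (a i : k)) (W * diagonal fun j => (b j : k)) := by
  intro i j
  have hscaled :
      ∑ r, (W * diagonal fun j => (b j : k)) r j * (V * diagonal fun i => (a i : k)) r i =
        ((b j : k) * a i) * ∑ r, W r j * V r i := by
    rw [Finset.mul_sum]
    refine Finset.sum_congr rfl fun r _ => ?_
    simp only [mul_diagonal]
    ring
  rw [← hW i j, hscaled, mul_eq_zero, mul_eq_zero]
  simp

end TorusAction

theorem stmt7_general {k : Type*} [Field k] {n d h : ℕ} (M : Matroid (Fin n))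
    (H : Fin h → Set (Fin n))
    (V : Matrix (Fin (d + 1)) (Fin n) k) (hV : IsRealization M V)
    (W : Matrix (Fin (d + 1)) (Fin h) k) (hW : IsNormalMatrix H V W)
    (dn : Fin n → kˣ) (dh : Fin h → kˣ) :
    ∃ (V' : Matrix (Fin (d + 1)) (Fin n) k) (W' : Matrix (Fin (d + 1)) (Fin h) k),
      IsRealization M V' ∧ IsNormalMatrix H V' W' ∧
        V'ᵀ * W' = Matrix.diagonal (fun i => (dn i : k)) * (Vᵀ * W) *
          Matrix.diagonal (fun j => (dh j : k)) :=
  ⟨_, _, hV.mul_diagonal_units dn, hW.mul_diagonal_units dn dh,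
    Matrix.transpose_mul_diagonal_mul_mul_diagonal V W _ _⟩

/-- the set of slack matrices of realizations of `M` is closed under the
torus action of row and column scalings. -/
theorem stmt7 {k : Type*} [Field k] {n d h : ℕ} (M : Matroid (Fin n))
    (hE : M.E = Set.univ) (hrk : HasRank M (d + 1))
    (H : Fin h → Set (Fin n)) (hH : HypEnum M d H)
    (V : Matrix (Fin (d + 1)) (Fin n) k) (hV : IsRealization M V)
    (W : Matrix (Fin (d + 1)) (Fin h) k) (hW : IsNormalMatrix H V W)
    (dn : Fin n → kˣ) (dh : Fin h → kˣ) :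
    ∃ (V' : Matrix (Fin (d + 1)) (Fin n) k) (W' : Matrix (Fin (d + 1)) (Fin h) k),
      IsRealization M V' ∧ IsNormalMatrix H V' W' ∧
        V'ᵀ * W' = Matrix.diagonal (fun i => (dn i : k)) * (Vᵀ * W) *
          Matrix.diagonal (fun j => (dh j : k)) :=
  stmt7_general M H V hV W hW dn dh
end

section
/- The following are equivalent: (i) 1 ∈ I_M; (ii) there exists a monic monomial m ∈ R (a finite product of the variables, possibly with repetitions) with m ∈ J; (iii) there exist a monic monomial m ∈ R and an element g ∈ I_M such that m + g ∈ J (that is, a slack final polynomial for M exists). -/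
open Classical Matrix MvPolynomial

/-!
A power `P ^ N` of the product of all variables is a monic monomial, and conversely a monic
monomial `m` divides some `P ^ K`, so `P ^ N * m ∈ J` gives `P ^ (N + K) ∈ J`. If `m + g ∈ J` with `P ^ N * g ∈ J`, then `P ^ N * m ∈ J` as well.
-/

theorem Multiset.prod_map_dvd_pow_card {α M : Type*} [CommMonoid M] {s : Multiset α}
    {f : α → M} {p : M} (h : ∀ a ∈ s, f a ∣ p) : (s.map f).prod ∣ p ^ Multiset.card s := by
  simpa using Multiset.prod_dvd_prod_of_dvd f (fun _ => p) h

section Saturation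

variable {R : Type*} [CommRing R] {J : Ideal R} {p m g : R}

theorem Ideal.pow_mul_mem_of_add_mem {N : ℕ} (hg : p ^ N * g ∈ J) (hmg : m + g ∈ J) :
    p ^ N * m ∈ J := by
  have := J.sub_mem (J.mul_mem_left (p ^ N) hmg) hg
  rwa [mul_add, add_sub_cancel_right] at this

theorem Ideal.pow_add_mem_of_dvd_pow {N K : ℕ} (hm : m ∣ p ^ K) (h : p ^ N * m ∈ J) :
    p ^ (N + K) ∈ J := by
  obtain ⟨c, hc⟩ := hm
  rw [pow_add, hc, ← mul_assoc]
  exact J.mul_mem_right c h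

end Saturation

section SlackMonomials

variable {n h : ℕ} (H : Fin h → Set (Fin n)) (k : Type*) [Field k]

theorem prod_map_X_dvd_allVarsProd_pow (t : Multiset (SlackVar H)) :
    (t.map (fun e => (X e : MvPolynomial (SlackVar H) k))).prod ∣
      allVarsProd H k ^ Multiset.card t :=
  Multiset.prod_map_dvd_pow_card fun e _ => Finset.dvd_prod_of_mem _ (Finset.mem_univ e)

theorem prod_map_X_nsmul_univ (N : ℕ) :
    ((N • (Finset.univ.val : Multiset (SlackVar H))).map
      (fun e => (X e : MvPolynomial (SlackVar H) k))).prod = allVarsProd H k ^ N := by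
  rw [Multiset.map_nsmul, Multiset.prod_nsmul]
  rfl

end SlackMonomials

theorem stmt10_general {k : Type*} [Field k] {n d h : ℕ}
    (H : Fin h → Set (Fin n)) :
    List.TFAE [
      (1 : MvPolynomial (SlackVar H) k) ∈ slackSet d H k,
      ∃ t : Multiset (SlackVar H),
        (t.map (fun e => (X e : MvPolynomial (SlackVar H) k))).prod ∈ minorIdeal d H k,
      ∃ (t : Multiset (SlackVar H)) (g : MvPolynomial (SlackVar H) k),
        g ∈ slackSet d H k ∧
        (t.map (fun e => (X e : MvPolynomial (SlackVar H) k))).prod + g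
          ∈ minorIdeal d H k ] := by
  tfae_have 1 → 2 := by
    rintro ⟨N, hN⟩
    refine ⟨N • Finset.univ.val, ?_⟩
    rw [prod_map_X_nsmul_univ]
    simpa using hN
  tfae_have 2 → 3 := fun ⟨t, ht⟩ =>
    ⟨t, 0, ⟨0, by simp⟩, by simpa using ht⟩
  tfae_have 3 → 1 := by
    rintro ⟨t, g, ⟨N, hg⟩, hmg⟩
    refine ⟨N + Multiset.card t, ?_⟩
    rw [mul_one]
    exact Ideal.pow_add_mem_of_dvd_pow (prod_map_X_dvd_allVarsProd_pow H k t)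
      (Ideal.pow_mul_mem_of_add_mem hg hmg)
  tfae_finish

/-- `1 ∈ I_M` iff a monic monomial lies in `J` iff a slack final polynomial
exists for `M`. -/
theorem stmt10 {k : Type*} [Field k] {n d h : ℕ} (M : Matroid (Fin n))
    (hE : M.E = Set.univ) (hrk : HasRank M (d + 1))
    (H : Fin h → Set (Fin n)) (hH : HypEnum M d H) :
    List.TFAE [
      (1 : MvPolynomial (SlackVar H) k) ∈ slackSet d H k,
      ∃ t : Multiset (SlackVar H),
        (t.map (fun e => (X e : MvPolynomial (SlackVar H) k))).prod ∈ minorIdeal d H k,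
      ∃ (t : Multiset (SlackVar H)) (g : MvPolynomial (SlackVar H) k),
        g ∈ slackSet d H k ∧
        (t.map (fun e => (X e : MvPolynomial (SlackVar H) k))).prod + g
          ∈ minorIdeal d H k ] :=
  stmt10_general H
end

section
/- Let V be a realization of M, W a normal matrix for V, and S = Vᵀ * W the corresponding slack matrix. Let φ : R →ₐ[k] MvPolynomial (Fin n ⊕ Fin h) k be the k-algebra homomorphism determined by sending the variable x_(i,j) to (S i j) • (X (Sum.inl i) * X (Sum.inr j)). Then the cycle ideal C_S equals the kernel of φ; in particular C_S is a prime (toric) ideal. -/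
open Classical Matrix MvPolynomial

/-!
The monomial map `φ` sends `x_(i,j)` to `S i j • t_i t_j`, so its kernel is spanned by the
binomials `S^v x^u - S^u x^v` (where `S^u = ∏ S_e ^ u_e`) with `u`, `v` of equal bipartite
degree: group the terms of a kernel element by degree. Such a binomial lies in the cycle ideal
by induction on `u`: a variable common to `x^u` and `x^v` factors out, and otherwise degree
balance lets one walk alternately along `u`-edges and `v`-edges until the walk closes up into a
simple cycle, whose cycle binomial splits off a smaller binomial of the same kind.
-/

open Function

namespace Finsupp

lemma linearCombination_apply_ne_zero_iff {σ τ : Type*} (D : σ → τ →₀ ℕ) (u : σ →₀ ℕ)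
    (t : τ) : linearCombination ℕ D u t ≠ 0 ↔ ∃ e, u e ≠ 0 ∧ D e t ≠ 0 := by
  simp [linearCombination_apply, Finsupp.sum, finsetSum_apply, Finset.sum_eq_zero_iff]

lemma eq_zero_of_linearCombination_eq_zero {σ τ : Type*} {D : σ → τ →₀ ℕ} (hD : ∀ e, D e ≠ 0)
    {u : σ →₀ ℕ} (hu : linearCombination ℕ D u = 0) : u = 0 := by
  ext e
  by_contra he
  obtain ⟨t, ht⟩ := ne_iff.1 (hD e)
  exact (linearCombination_apply_ne_zero_iff D u t).2 ⟨e, he, ht⟩ (by simp [hu])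

lemma sum_single_one_le {ι σ : Type*} [Fintype ι] {ε : ι → σ} (hε : Injective ε)
    {u : σ →₀ ℕ} (hu : ∀ q, u (ε q) ≠ 0) : ∑ q, single (ε q) 1 ≤ u := by
  intro e
  rw [finsetSum_apply]
  by_cases he : ∃ q, ε q = e
  · obtain ⟨q, rfl⟩ := he
    simpa [single_apply, hε.eq_iff, Nat.one_le_iff_ne_zero] using hu q
  · simp only [not_exists] at he
    simp [he]

end Finsupp

section MonomialMap

variable {R σ τ : Type*}

def monomialWeight [CommMonoid R] (c : σ → R) (u : σ →₀ ℕ) : R :=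
  u.prod fun e m => c e ^ m

section CommMonoid

variable [CommMonoid R] (c : σ → R)

lemma monomialWeight_add (u v : σ →₀ ℕ) :
    monomialWeight c (u + v) = monomialWeight c u * monomialWeight c v :=
  Finsupp.prod_add_index' (fun _ => pow_zero _) fun _ _ _ => pow_add _ _ _

lemma monomialWeight_sum {ι : Type*} (s : Finset ι) (g : ι → σ →₀ ℕ) :
    monomialWeight c (∑ i ∈ s, g i) = ∏ i ∈ s, monomialWeight c (g i) :=
  (Finsupp.prod_finsetSum_index (fun _ => pow_zero _) fun _ _ _ => pow_add _ _ _).symm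

lemma monomialWeight_single_one (e : σ) : monomialWeight c (Finsupp.single e 1) = c e := by
  simp [monomialWeight]

end CommMonoid

lemma monomialWeight_ne_zero [CommMonoidWithZero R] [NoZeroDivisors R] [Nontrivial R]
    {c : σ → R} (hc : ∀ e, c e ≠ 0) (u : σ →₀ ℕ) : monomialWeight c u ≠ 0 :=
  Finset.prod_ne_zero_iff.mpr fun e _ => pow_ne_zero _ (hc e)

variable [CommRing R] (c : σ → R)

noncomputable def weightedBinomial (u v : σ →₀ ℕ) : MvPolynomial σ R :=
  monomial u (monomialWeight c v) - monomial v (monomialWeight c u)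

@[simp] lemma weightedBinomial_self (u : σ →₀ ℕ) : weightedBinomial c u u = 0 :=
  sub_self _

lemma weightedBinomial_add (u₁ u₂ v₁ v₂ : σ →₀ ℕ) :
    weightedBinomial c (u₁ + u₂) (v₁ + v₂) =
      monomial u₂ (monomialWeight c v₂) * weightedBinomial c u₁ v₁ +
        monomial v₁ (monomialWeight c u₁) * weightedBinomial c u₂ v₂ := by
  simp only [weightedBinomial, mul_sub, monomial_mul, monomialWeight_add]
  rw [add_comm u₂ u₁, add_comm v₁ u₂, add_comm u₂ v₁]
  ring_nf

lemma weightedBinomial_add_mem {I : Ideal (MvPolynomial σ R)} {u₁ u₂ v₁ v₂ : σ →₀ ℕ}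
    (h₁ : weightedBinomial c u₁ v₁ ∈ I) (h₂ : weightedBinomial c u₂ v₂ ∈ I) :
    weightedBinomial c (u₁ + u₂) (v₁ + v₂) ∈ I := by
  rw [weightedBinomial_add]
  exact I.add_mem (I.mul_mem_left _ h₁) (I.mul_mem_left _ h₂)

variable (D : σ → τ →₀ ℕ)

noncomputable def monomialMap : MvPolynomial σ R →ₐ[R] MvPolynomial τ R :=
  aeval fun e => monomial (D e) (c e)

lemma monomialMap_monomial (u : σ →₀ ℕ) (a : R) :
    monomialMap c D (monomial u a) =
      monomial (Finsupp.linearCombination ℕ D u) (a * monomialWeight c u) := by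
  simp only [monomialMap, aeval_monomial, monomial_pow, Finsupp.prod, monomialWeight,
    ← monomial_sum_prod, algebraMap_eq, C_mul_monomial, Finsupp.linearCombination_apply,
    Finsupp.sum]

lemma monomialMap_weightedBinomial {u v : σ →₀ ℕ}
    (h : Finsupp.linearCombination ℕ D u = Finsupp.linearCombination ℕ D v) :
    monomialMap c D (weightedBinomial c u v) = 0 := by
  rw [weightedBinomial, map_sub, monomialMap_monomial, monomialMap_monomial, h, mul_comm,
    sub_self]

lemma coeff_monomialMap (p : MvPolynomial σ R) (t : τ →₀ ℕ) :
    coeff t (monomialMap c D p) =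
      ∑ u ∈ p.support with Finsupp.linearCombination ℕ D u = t,
        coeff u p * monomialWeight c u := by
  conv_lhs => rw [p.as_sum, map_sum]
  simp only [monomialMap_monomial, coeff_sum, coeff_monomial, Finset.sum_filter]

end MonomialMap

lemma ker_monomialMap_le {σ τ k : Type*} [Field k] {c : σ → k} (hc : ∀ e, c e ≠ 0)
    (D : σ → τ →₀ ℕ) {I : Ideal (MvPolynomial σ k)}
    (hI : ∀ u v, Finsupp.linearCombination ℕ D u = Finsupp.linearCombination ℕ D v →
      weightedBinomial c u v ∈ I) :
    RingHom.ker (monomialMap c D) ≤ I := by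
  intro p hp
  set A := Finsupp.linearCombination ℕ D
  set w := monomialWeight c
  set r : (σ →₀ ℕ) → σ →₀ ℕ := fun u => Function.invFun A (A u)
  have hr : ∀ u, A (r u) = A u := fun u => Function.invFun_eq ⟨u, rfl⟩
  have hmono : ∀ u a, monomial u a - monomial (r u) (a * w u / w (r u)) ∈ I := by
    intro u a
    convert I.mul_mem_left (C (a / w (r u))) (hI u (r u) (hr u).symm) using 1
    rw [weightedBinomial, mul_sub, C_mul_monomial, C_mul_monomial,
      div_mul_cancel₀ _ (monomialWeight_ne_zero hc _), div_mul_eq_mul_div]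
  have hrest : ∑ u ∈ p.support, monomial (r u) (coeff u p * w u / w (r u)) = 0 := by
    rw [← Finset.sum_fiberwise_of_maps_to (g := A) fun u hu => Finset.mem_image_of_mem A hu]
    refine Finset.sum_eq_zero fun t _ => ?_
    have hfib : ∀ u ∈ p.support.filter (A · = t), r u = Function.invFun A t :=
      fun u hu => by simp only [r, (Finset.mem_filter.1 hu).2]
    rw [Finset.sum_congr rfl fun u hu => by rw [hfib u hu], ← map_sum, ← Finset.sum_div,
      ← coeff_monomialMap, RingHom.mem_ker.1 hp, coeff_zero, zero_div, monomial_zero]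
  have hp' : p = ∑ u ∈ p.support,
      (monomial u (coeff u p) - monomial (r u) (coeff u p * w u / w (r u))) := by
    rw [Finset.sum_sub_distrib, hrest, sub_zero]
    exact p.as_sum
  rw [hp']
  exact I.sum_mem fun u _ => hmono u _

lemma cycSucc_eq_add_one {m : ℕ} [NeZero m] (q : Fin m) : cycSucc q = q + 1 :=
  Fin.ext (by simp [cycSucc, Fin.val_add])

lemma cycSucc_bijective {m : ℕ} : Bijective (cycSucc : Fin m → Fin m) := by
  cases m with
  | zero => exact ⟨fun q => q.elim0, fun q => q.elim0⟩
  | succ m =>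
    rw [show (cycSucc : Fin (m + 1) → Fin (m + 1)) = (· + 1) from funext cycSucc_eq_add_one]
    exact (Equiv.addRight 1).bijective

lemma Function.exists_iterate_mem_periodicPts {α : Type*} [Finite α] (f : α → α) (x : α) :
    ∃ N, f^[N] x ∈ periodicPts f := by
  obtain ⟨M, N, heq, hne⟩ : ∃ M N, f^[M] x = f^[N] x ∧ M ≠ N := by
    simpa [Injective] using not_injective_infinite_finite (f^[·] x)
  wlog hlt : M < N generalizing M N
  · exact this N M heq.symm hne.symm (by omega)
  refine ⟨M, mk_mem_periodicPts (Nat.sub_pos_of_lt hlt) ?_⟩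
  rw [IsPeriodicPt, IsFixedPt, ← iterate_add_apply, Nat.sub_add_cancel hlt.le, heq]

/-- Iterate "leave the row along a `P`-edge, return along a `Q`-edge chosen by its column" on the
rows met by `P` until it reaches a periodic orbit. The rows of the orbit are distinct, and so are
its columns because the return step depends only on the column. -/
lemma exists_alternating_cycle {ι κ : Type*} [Finite ι] (P Q : ι → κ → Prop)
    (hPQ : ∀ i j, P i j → ¬ Q i j) (hP_col : ∀ i j, P i j → ∃ i', Q i' j)
    (hQ_row : ∀ i j, Q i j → ∃ j', P i j') {i₀ : ι} {j₀ : κ} (h₀ : P i₀ j₀) :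
    ∃ m, 2 ≤ m ∧ ∃ (a : Fin m → ι) (b : Fin m → κ), Injective a ∧ Injective b ∧
      (∀ q, P (a q) (b q)) ∧ ∀ q, Q (a (cycSucc q)) (b q) := by
  let Rows := {i // ∃ j, P i j}
  choose β hβ using fun i : Rows => i.2
  have hγ : ∀ j, ∃ i' : Rows, (∃ i, P i j) → Q i' j := by
    intro j
    by_cases hj : ∃ i, P i j
    · obtain ⟨i, hi⟩ := hj
      obtain ⟨i', hq⟩ := hP_col i j hi
      exact ⟨⟨i', hQ_row _ _ hq⟩, fun _ => hq⟩
    · exact ⟨⟨i₀, j₀, h₀⟩, fun h => absurd h hj⟩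
  choose γ hγ using hγ
  let f : Rows → Rows := fun i => γ (β i)
  have hf : ∀ i, Q (f i) (β i) := fun i => hγ _ ⟨i, hβ i⟩
  obtain ⟨N, hN⟩ := exists_iterate_mem_periodicPts f ⟨i₀, j₀, h₀⟩
  set x := f^[N] ⟨i₀, j₀, h₀⟩
  have hm := minimalPeriod_pos_of_mem_periodicPts hN
  have hsucc : ∀ q : Fin (minimalPeriod f x), f^[cycSucc q] x = f (f^[q] x) := fun q => by
    rw [cycSucc, iterate_mod_minimalPeriod_eq, iterate_succ_apply']
  have ha : Injective fun q : Fin (minimalPeriod f x) => (f^[q] x : ι) := fun q q' h =>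
    Fin.ext (iterate_injOn_Iio_minimalPeriod q.2 q'.2 (Subtype.ext h))
  refine ⟨minimalPeriod f x, ?_, fun q => f^[q] x, fun q => β (f^[q] x), ha, ?_,
    fun q => hβ _, fun q => by beta_reduce; rw [hsucc]; exact hf _⟩
  · by_contra! hlt
    have hfix : f x = x := by
      have := isPeriodicPt_minimalPeriod f x
      rw [show minimalPeriod f x = 1 by omega] at this
      exact this
    have hQ := hf x
    rw [hfix] at hQ
    exact hPQ _ _ (hβ x) hQ
  · intro q q' h
    apply cycSucc_bijective.1
    apply ha
    simp only [hsucc, f, h]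

section Slack

variable {k : Type*} [Field k] {n h : ℕ} {H : Fin h → Set (Fin n)}

noncomputable def slackDegree (e : SlackVar H) : Fin n ⊕ Fin h →₀ ℕ :=
  Finsupp.single (Sum.inl e.1.1) 1 + Finsupp.single (Sum.inr e.1.2) 1

def slackEntry (S : Matrix (Fin n) (Fin h) k) (e : SlackVar H) : k :=
  S e.1.1 e.1.2

def IsSupportEdge (u : SlackVar H →₀ ℕ) (i : Fin n) (j : Fin h) : Prop :=
  ∃ hij : i ∉ H j, u ⟨(i, j), hij⟩ ≠ 0

lemma slackDegree_ne_zero (e : SlackVar H) : slackDegree e ≠ 0 := by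
  simp [slackDegree]

lemma aeval_eq_monomialMap (S : Matrix (Fin n) (Fin h) k) :
    aeval (fun e : SlackVar H => S e.1.1 e.1.2 • (X (Sum.inl e.1.1) * X (Sum.inr e.1.2))) =
      monomialMap (slackEntry S) slackDegree := by
  unfold monomialMap
  congr 1
  funext e
  simp only [smul_eq_C_mul, X, monomial_mul, C_mul_monomial, mul_one]
  rfl

lemma linearCombination_slackDegree_inl_ne_zero_iff (u : SlackVar H →₀ ℕ) (i : Fin n) :
    Finsupp.linearCombination ℕ slackDegree u (Sum.inl i) ≠ 0 ↔ ∃ j, IsSupportEdge u i j := by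
  rw [Finsupp.linearCombination_apply_ne_zero_iff]
  constructor
  · rintro ⟨⟨⟨i', j⟩, hij⟩, hu, hD⟩
    obtain rfl : i' = i := by simpa [slackDegree, Finsupp.single_apply] using hD
    exact ⟨j, hij, hu⟩
  · rintro ⟨j, hij, hu⟩
    exact ⟨_, hu, by simp [slackDegree]⟩

lemma linearCombination_slackDegree_inr_ne_zero_iff (u : SlackVar H →₀ ℕ) (j : Fin h) :
    Finsupp.linearCombination ℕ slackDegree u (Sum.inr j) ≠ 0 ↔ ∃ i, IsSupportEdge u i j := by
  rw [Finsupp.linearCombination_apply_ne_zero_iff]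
  constructor
  · rintro ⟨⟨⟨i, j'⟩, hij⟩, hu, hD⟩
    obtain rfl : j' = j := by simpa [slackDegree, Finsupp.single_apply] using hD
    exact ⟨i, hij, hu⟩
  · rintro ⟨i, hij, hu⟩
    exact ⟨_, hu, by simp [slackDegree]⟩

noncomputable def cycleExponent {m : ℕ} (a : Fin m → Fin n) (b : Fin m → Fin h)
    (hab : ∀ q, a q ∉ H (b q)) : SlackVar H →₀ ℕ :=
  ∑ q, Finsupp.single ⟨(a q, b q), hab q⟩ 1

lemma cycleExponent_ne_zero {m : ℕ} (hm : 0 < m) {a : Fin m → Fin n} {b : Fin m → Fin h}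
    (hab : ∀ q, a q ∉ H (b q)) : cycleExponent a b hab ≠ 0 := fun h =>
  Finsupp.single_ne_zero.2 one_ne_zero (Finset.sum_eq_zero_iff.1 h ⟨0, hm⟩ (Finset.mem_univ _))

lemma cycleExponent_le {m : ℕ} {a : Fin m → Fin n} {b : Fin m → Fin h} (hb : Injective b)
    {hab : ∀ q, a q ∉ H (b q)} {u : SlackVar H →₀ ℕ} (hu : ∀ q, u ⟨(a q, b q), hab q⟩ ≠ 0) :
    cycleExponent a b hab ≤ u :=
  Finsupp.sum_single_one_le (fun _ _ hqq' => hb (congrArg (fun e : SlackVar H => e.1.2) hqq')) hu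

lemma linearCombination_cycleExponent {m : ℕ} (a : Fin m → Fin n) (b : Fin m → Fin h)
    (h₁ : ∀ q, a q ∉ H (b q)) (h₂ : ∀ q, a (cycSucc q) ∉ H (b q)) :
    Finsupp.linearCombination ℕ slackDegree (cycleExponent a b h₁) =
      Finsupp.linearCombination ℕ slackDegree (cycleExponent (fun q => a (cycSucc q)) b h₂) := by
  simp only [cycleExponent, map_sum, Finsupp.linearCombination_single, one_smul, slackDegree,
    Finset.sum_add_distrib]
  rw [cycSucc_bijective.sum_comp fun q => Finsupp.single (Sum.inl (a q)) 1]

lemma cycleBinomial_eq_weightedBinomial (S : Matrix (Fin n) (Fin h) k) {m : ℕ} (a : Fin m → Fin n)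
    (b : Fin m → Fin h) (h₁ : ∀ q, a q ∉ H (b q)) (h₂ : ∀ q, a (cycSucc q) ∉ H (b q)) :
    C (∏ q, S (a (cycSucc q)) (b q)) * ∏ q, X ⟨(a q, b q), h₁ q⟩ -
        C (∏ q, S (a q) (b q)) * ∏ q, X ⟨(a (cycSucc q), b q), h₂ q⟩ =
      weightedBinomial (slackEntry S) (cycleExponent a b h₁)
        (cycleExponent (fun q => a (cycSucc q)) b h₂) := by
  simp only [weightedBinomial, cycleExponent, monomialWeight_sum, monomialWeight_single_one,
    slackEntry, monomial_sum_index, map_prod]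
  rfl

lemma weightedBinomial_cycleExponent_mem (S : Matrix (Fin n) (Fin h) k) {m : ℕ} (hm : 2 ≤ m)
    {a : Fin m → Fin n} {b : Fin m → Fin h} (ha : Injective a) (hb : Injective b)
    (h₁ : ∀ q, a q ∉ H (b q)) (h₂ : ∀ q, a (cycSucc q) ∉ H (b q)) :
    weightedBinomial (slackEntry S) (cycleExponent a b h₁)
      (cycleExponent (fun q => a (cycSucc q)) b h₂) ∈ cycleIdeal H S := by
  rw [← cycleBinomial_eq_weightedBinomial]
  exact Ideal.subset_span ⟨m, hm, a, b, ha, hb, h₁, h₂, rfl⟩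

lemma cycleIdeal_le_ker (S : Matrix (Fin n) (Fin h) k) :
    cycleIdeal H S ≤ RingHom.ker (monomialMap (slackEntry S) slackDegree) := by
  rw [cycleIdeal, Ideal.span_le]
  rintro _ ⟨m, -, a, b, -, -, h₁, h₂, rfl⟩
  rw [SetLike.mem_coe, RingHom.mem_ker, cycleBinomial_eq_weightedBinomial]
  exact monomialMap_weightedBinomial _ _ (linearCombination_cycleExponent a b h₁ h₂)

lemma weightedBinomial_mem_cycleIdeal (S : Matrix (Fin n) (Fin h) k) (u v : SlackVar H →₀ ℕ)
    (huv : Finsupp.linearCombination ℕ slackDegree u =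
      Finsupp.linearCombination ℕ slackDegree v) :
    weightedBinomial (slackEntry S) u v ∈ cycleIdeal H S := by
  induction u using WellFoundedLT.induction generalizing v with
  | _ u ih =>
  rcases eq_or_ne u 0 with rfl | hu
  · obtain rfl := Finsupp.eq_zero_of_linearCombination_eq_zero slackDegree_ne_zero (huv.symm.trans
      (map_zero _))
    simp
  by_cases hcommon : ∃ e, u e ≠ 0 ∧ v e ≠ 0
  · obtain ⟨e, hue, hve⟩ := hcommon
    obtain ⟨u', rfl⟩ := le_iff_exists_add.1 
      (Finsupp.single_le_iff.2 (Nat.one_le_iff_ne_zero.2 hue))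
    obtain ⟨v', rfl⟩ := le_iff_exists_add.1 
      (Finsupp.single_le_iff.2 (Nat.one_le_iff_ne_zero.2 hve))
    rw [map_add, map_add] at huv
    refine weightedBinomial_add_mem _ (by simp) (ih u' ?_ v' (add_left_cancel huv))
    exact lt_add_of_pos_left _ (pos_iff_ne_zero.2 (Finsupp.single_ne_zero.2 one_ne_zero))
  simp only [not_exists, not_and, not_not] at hcommon
  obtain ⟨e₀, he₀⟩ := Finsupp.ne_iff.1 hu
  obtain ⟨m, hm, a, b, ha, hb, hP, hQ⟩ := exists_alternating_cycle (IsSupportEdge u)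
    (IsSupportEdge v) (fun _ _ ⟨_, hu⟩ ⟨_, hv⟩ => hv (hcommon _ hu))
    (fun i j hP => (linearCombination_slackDegree_inr_ne_zero_iff v j).1
      (huv ▸ (linearCombination_slackDegree_inr_ne_zero_iff u j).2 ⟨i, hP⟩))
    (fun i j hQ => (linearCombination_slackDegree_inl_ne_zero_iff u i).1
      (huv ▸ (linearCombination_slackDegree_inl_ne_zero_iff v i).2 ⟨j, hQ⟩))
    (show IsSupportEdge u e₀.1.1 e₀.1.2 from ⟨e₀.2, he₀⟩)
  choose h₁ hu₁ using hP
  choose h₂ hv₂ using hQ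
  obtain ⟨u', rfl⟩ := le_iff_exists_add.1 (cycleExponent_le hb hu₁)
  obtain ⟨v', rfl⟩ := le_iff_exists_add.1 (cycleExponent_le hb hv₂)
  rw [map_add, map_add, linearCombination_cycleExponent a b h₁ h₂] at huv
  refine weightedBinomial_add_mem _ (weightedBinomial_cycleExponent_mem S hm ha hb h₁ h₂)
    (ih u' ?_ v' (add_left_cancel huv))
  exact lt_add_of_pos_left _ (pos_iff_ne_zero.2 (cycleExponent_ne_zero (by omega) h₁))

end Slack

lemma cycleIdeal_eq_ker {k : Type*} [Field k] {n h : ℕ} {H : Fin h → Set (Fin n)}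
    {S : Matrix (Fin n) (Fin h) k} (hS : ∀ i j, i ∉ H j → S i j ≠ 0) :
    cycleIdeal H S = RingHom.ker (monomialMap (slackEntry S) slackDegree) :=
  le_antisymm (cycleIdeal_le_ker S)
    (ker_monomialMap_le (fun e => hS _ _ e.2) _ (weightedBinomial_mem_cycleIdeal S))

lemma IsNormalMatrix.transpose_mul_apply_ne_zero {k : Type*} [Field k] {n d h : ℕ}
    {H : Fin h → Set (Fin n)} {V : Matrix (Fin (d + 1)) (Fin n) k}
    {W : Matrix (Fin (d + 1)) (Fin h) k} (hW : IsNormalMatrix H V W) (i : Fin n) (j : Fin h)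
    (hij : i ∉ H j) : (Vᵀ * W) i j ≠ 0 :=
  fun h0 => hij ((hW i j).1 (by simpa [Matrix.mul_apply, mul_comm] using h0))

theorem stmt11_general {k : Type*} [Field k] {n d h : ℕ} (H : Fin h → Set (Fin n))
    (V : Matrix (Fin (d + 1)) (Fin n) k)
    (W : Matrix (Fin (d + 1)) (Fin h) k) (hW : IsNormalMatrix H V W)
    (φ : MvPolynomial (SlackVar H) k →ₐ[k] MvPolynomial (Fin n ⊕ Fin h) k)
    (hφ : φ = MvPolynomial.aeval (fun e : SlackVar H =>
      ((Vᵀ * W) e.1.1 e.1.2) • (X (Sum.inl e.1.1) * X (Sum.inr e.1.2)))) :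
    cycleIdeal H (Vᵀ * W) = RingHom.ker φ ∧ (cycleIdeal H (Vᵀ * W)).IsPrime := by
  have hker : cycleIdeal H (Vᵀ * W) = RingHom.ker φ := by
    rw [hφ, aeval_eq_monomialMap]
    exact cycleIdeal_eq_ker hW.transpose_mul_apply_ne_zero
  exact ⟨hker, hker ▸ RingHom.ker_isPrime φ⟩

/-- the cycle ideal of a slack matrix is the kernel of the monomial map `φ`,
and in particular it is a prime (toric) ideal. -/
theorem stmt11 {k : Type*} [Field k] {n d h : ℕ} (M : Matroid (Fin n))
    (hE : M.E = Set.univ) (hrk : HasRank M (d + 1))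
    (H : Fin h → Set (Fin n)) (hH : HypEnum M d H)
    (V : Matrix (Fin (d + 1)) (Fin n) k) (hV : IsRealization M V)
    (W : Matrix (Fin (d + 1)) (Fin h) k) (hW : IsNormalMatrix H V W)
    (φ : MvPolynomial (SlackVar H) k →ₐ[k] MvPolynomial (Fin n ⊕ Fin h) k)
    (hφ : φ = MvPolynomial.aeval (fun e : SlackVar H =>
      ((Vᵀ * W) e.1.1 e.1.2) • (X (Sum.inl e.1.1) * X (Sum.inr e.1.2)))) :
    cycleIdeal H (Vᵀ * W) = RingHom.ker φ ∧ (cycleIdeal H (Vᵀ * W)).IsPrime :=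
  stmt11_general H V W hW φ hφ
end
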